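/- arXiv:2502.18686 — 2 statements merged into one kernel-verified Lean document; each statement's English description precedes it below -/
import Mathlib

section
/- Let n ≥ 3 and let p = (1,0,…,0) ∈ ℝⁿ. Let a be an elastic 2-tensor (a_{ijkl} = a_{jikl} = a_{ijlk} = a_{klij}) with a_{11ij} = 0 for all i,j. Then the following are equivalent: (1) for all unit v ⊥ p, ∑ a_{ijkl} v_i v_j v_k v_l = 0 and ∑ a_{ijkl} v_i q_j v_k q_l = 0 for all q ⊥ v; (2) for all i,j,k,l ≥ 2: a_{ijkl} = 0, a_{1i1j} = 0, a_{1ijk} = 0 when j ≠ k, and a_{1i22} = a_{1i33} = ⋯ = a_{1inn}. -/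
/-!
Write `A(x, y, z, w) = ∑ a_{ijkl} x_i y_j z_k w_l` and let `H = p^⊥`. By homogeneity the unit
length constraint is void, and splitting `q = c p + u` with `u ∈ H, u ⊥ v` turns the first
condition into three: `A` vanishes on `H`, `A(v, p, v, p) = 0`, and `A(p, v, v, u) = 0` whenever
`u ⊥ v` in `H`. For the first one, polarizing `A(v, v, v, v) = 0` gives `A(v, v, v, u) = 0`, hence
`A(x, y, x, y) = 0` on all of `H`; polarizing again makes `A|_H` alternating in the slots 2, 4,
while it is symmetric in the slots 3, 4, so it vanishes. The other two are read off on the basis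
vectors of `H`, using the orthogonal pairs `(e_r + e_s, e_t)` and `(e_r ± e_s, e_r ∓ e_s)`.
-/

open Finset

variable {ι : Type*}

def coordHyperplane (i₀ : ι) : Submodule ℝ (ι → ℝ) := LinearMap.ker (LinearMap.proj i₀)

@[simp] lemma mem_coordHyperplane {i₀ : ι} {v : ι → ℝ} :
    v ∈ coordHyperplane i₀ ↔ v i₀ = 0 :=
  Iff.rfl

lemma single_mem_coordHyperplane [DecidableEq ι] {i₀ i : ι} (h : i ≠ i₀) :
    Pi.single i (1 : ℝ) ∈ coordHyperplane i₀ := by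
  simp [h.symm]

variable [Fintype ι]

structure IsElastic (a : ι → ι → ι → ι → ℝ) : Prop where
  swap_left : ∀ i j k l, a i j k l = a j i k l
  swap_right : ∀ i j k l, a i j k l = a i j l k
  swap_pairs : ∀ i j k l, a i j k l = a k l i j

def tensorForm (a : ι → ι → ι → ι → ℝ) (x y z w : ι → ℝ) : ℝ :=
  ∑ i, ∑ j, ∑ k, ∑ l, a i j k l * x i * y j * z k * w l

section Multilinear

variable (a : ι → ι → ι → ι → ℝ) (x x' y y' z z' w w' : ι → ℝ) (c : ℝ)

@[simp] lemma tensorForm_add₁ :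
    tensorForm a (x + x') y z w = tensorForm a x y z w + tensorForm a x' y z w := by
  simp only [tensorForm, Pi.add_apply, mul_add, add_mul, sum_add_distrib]

@[simp] lemma tensorForm_add₂ :
    tensorForm a x (y + y') z w = tensorForm a x y z w + tensorForm a x y' z w := by
  simp only [tensorForm, Pi.add_apply, mul_add, add_mul, sum_add_distrib]

@[simp] lemma tensorForm_add₃ :
    tensorForm a x y (z + z') w = tensorForm a x y z w + tensorForm a x y z' w := by
  simp only [tensorForm, Pi.add_apply, mul_add, add_mul, sum_add_distrib]

@[simp] lemma tensorForm_add₄ :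
    tensorForm a x y z (w + w') = tensorForm a x y z w + tensorForm a x y z w' := by
  simp only [tensorForm, Pi.add_apply, mul_add, sum_add_distrib]

@[simp] lemma tensorForm_sub₂ :
    tensorForm a x (y - y') z w = tensorForm a x y z w - tensorForm a x y' z w := by
  simp only [tensorForm, Pi.sub_apply, mul_sub, sub_mul, sum_sub_distrib]

@[simp] lemma tensorForm_sub₃ :
    tensorForm a x y (z - z') w = tensorForm a x y z w - tensorForm a x y z' w := by
  simp only [tensorForm, Pi.sub_apply, mul_sub, sub_mul, sum_sub_distrib]

@[simp] lemma tensorForm_sub₄ :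
    tensorForm a x y z (w - w') = tensorForm a x y z w - tensorForm a x y z w' := by
  simp only [tensorForm, Pi.sub_apply, mul_sub, sum_sub_distrib]

@[simp] lemma tensorForm_smul₁ : tensorForm a (c • x) y z w = c * tensorForm a x y z w := by
  simp only [tensorForm, Pi.smul_apply, smul_eq_mul, mul_sum]
  congr! 4; ring

@[simp] lemma tensorForm_smul₂ : tensorForm a x (c • y) z w = c * tensorForm a x y z w := by
  simp only [tensorForm, Pi.smul_apply, smul_eq_mul, mul_sum]
  congr! 4; ring

@[simp] lemma tensorForm_smul₃ : tensorForm a x y (c • z) w = c * tensorForm a x y z w := by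
  simp only [tensorForm, Pi.smul_apply, smul_eq_mul, mul_sum]
  congr! 4; ring

@[simp] lemma tensorForm_smul₄ : tensorForm a x y z (c • w) = c * tensorForm a x y z w := by
  simp only [tensorForm, Pi.smul_apply, smul_eq_mul, mul_sum]
  congr! 4; ring

end Multilinear

@[simp] lemma tensorForm_zero_left (a : ι → ι → ι → ι → ℝ) (y z w : ι → ℝ) :
    tensorForm a 0 y z w = 0 := by
  simp [tensorForm]

@[simp] lemma tensorForm_zero_coeff (x y z w : ι → ℝ) : tensorForm 0 x y z w = 0 := by
  simp [tensorForm]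

@[simp] lemma tensorForm_single [DecidableEq ι] (a : ι → ι → ι → ι → ℝ) (i j k l : ι) :
    tensorForm a (Pi.single i 1) (Pi.single j 1) (Pi.single k 1) (Pi.single l 1) = a i j k l := by
  simp [tensorForm, Pi.single_apply]

lemma tensorForm_congr {a b : ι → ι → ι → ι → ℝ} {x y z w : ι → ℝ}
    (h : ∀ i j k l, x i ≠ 0 → y j ≠ 0 → z k ≠ 0 → w l ≠ 0 → a i j k l = b i j k l) :
    tensorForm a x y z w = tensorForm b x y z w := by
  refine sum_congr rfl fun i _ => sum_congr rfl fun j _ => sum_congr rfl fun k _ =>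
    sum_congr rfl fun l _ => ?_
  rcases eq_or_ne (x i) 0 with hi | hi; · simp [hi]
  rcases eq_or_ne (y j) 0 with hj | hj; · simp [hj]
  rcases eq_or_ne (z k) 0 with hk | hk; · simp [hk]
  rcases eq_or_ne (w l) 0 with hl | hl; · simp [hl]
  rw [h i j k l hi hj hk hl]

lemma forall_of_forall_sum_sq_eq_one {P : (ι → ℝ) → Prop} (h0 : P 0)
    (hsmul : ∀ (c : ℝ) v, c ≠ 0 → P (c • v) → P v) (h : ∀ v, ∑ i, v i ^ 2 = 1 → P v)
    (v : ι → ℝ) : P v := by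
  rcases eq_or_ne v 0 with rfl | hv
  · exact h0
  have hpos : 0 < ∑ i, v i ^ 2 := by
    obtain ⟨i, hi⟩ := Function.ne_iff.1 hv
    exact sum_pos' (fun j _ => sq_nonneg (v j)) ⟨i, mem_univ i, pow_two_pos_of_ne_zero hi⟩
  refine hsmul (√(∑ i, v i ^ 2))⁻¹ v (by positivity) (h _ ?_)
  simp only [Pi.smul_apply, smul_eq_mul, mul_pow, ← mul_sum, inv_pow,
    Real.sq_sqrt hpos.le, inv_mul_cancel₀ hpos.ne']

namespace IsElastic

variable {a : ι → ι → ι → ι → ℝ}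

lemma tensorForm_swap_left (ha : IsElastic a) (x y z w : ι → ℝ) :
    tensorForm a x y z w = tensorForm a y x z w := by
  unfold tensorForm
  rw [sum_comm]
  congr! 4 with j _ i _ k _ l _
  rw [ha.swap_left]; ring

lemma tensorForm_swap_right (ha : IsElastic a) (x y z w : ι → ℝ) :
    tensorForm a x y z w = tensorForm a x y w z := by
  refine sum_congr rfl fun i _ => sum_congr rfl fun j _ => ?_
  rw [sum_comm]
  congr! 2 with l _ k _
  rw [ha.swap_right]; ring

lemma tensorForm_swap_pairs (ha : IsElastic a) (x y z w : ι → ℝ) :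
    tensorForm a x y z w = tensorForm a z w x y := by
  simp only [tensorForm, ← Fintype.sum_prod_type']
  refine Fintype.sum_equiv ⟨fun p => (p.2.2.1, p.2.2.2, p.1, p.2.1),
    fun p => (p.2.2.1, p.2.2.2, p.1, p.2.1), fun _ => rfl, fun _ => rfl⟩ _ _ fun p => ?_
  simp only [Equiv.coe_fn_mk]
  rw [ha.swap_pairs]; ring

lemma tensorForm_smul_add (ha : IsElastic a) (v e u : ι → ℝ) (c : ℝ) :
    tensorForm a v (c • e + u) v (c • e + u)
      = c ^ 2 * tensorForm a v e v e + 2 * c * tensorForm a e v v u + tensorForm a v u v u := by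
  simp only [tensorForm_add₂, tensorForm_add₄, tensorForm_smul₂, tensorForm_smul₄]
  rw [ha.tensorForm_swap_pairs v u v e, ha.tensorForm_swap_left v e v u]
  ring

variable {V : Submodule ℝ (ι → ℝ)}

lemma tensorForm_cubic_eq_zero (ha : IsElastic a) (hQ : ∀ v ∈ V, tensorForm a v v v v = 0)
    {v w : ι → ℝ} (hv : v ∈ V) (hw : w ∈ V) : tensorForm a v v v w = 0 := by
  have hQt (t : ℝ) := hQ (v + t • w) (V.add_mem hv (V.smul_mem t hw))
  -- the odd part of `t ↦ A(v + t w, …)` is `4 t A(v, v, v, w) + 4 t³ A(w, w, w, v)`;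
  -- `t = ±1, ±2` separate the two coefficients
  have h₁ := hQt 1
  have h₂ := hQt (-1)
  have h₃ := hQt 2
  have h₄ := hQt (-2)
  simp only [tensorForm_add₁, tensorForm_add₂, tensorForm_add₃, tensorForm_add₄,
    tensorForm_smul₁, tensorForm_smul₂, tensorForm_smul₃, tensorForm_smul₄] at h₁ h₂ h₃ h₄
  linarith [ha.tensorForm_swap_left w v v v, ha.tensorForm_swap_pairs v w v v,
    ha.tensorForm_swap_right v v w v, ha.tensorForm_swap_left v w w w,
    ha.tensorForm_swap_pairs w v w w, ha.tensorForm_swap_right w w v w]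

lemma tensorForm_mixed_eq_zero_of_orthogonal (ha : IsElastic a)
    (hQ : ∀ v ∈ V, tensorForm a v v v v = 0)
    (hM : ∀ v ∈ V, ∀ u ∈ V, u ⬝ᵥ v = 0 → tensorForm a v u v u = 0)
    {x y : ι → ℝ} (hx : x ∈ V) (hy : y ∈ V) : tensorForm a x y x y = 0 := by
  rcases eq_or_ne x 0 with rfl | hx₀
  · exact tensorForm_zero_left a _ _ _
  have hxx : x ⬝ᵥ x ≠ 0 := dotProduct_self_eq_zero.not.2 hx₀
  set c := (y ⬝ᵥ x) / (x ⬝ᵥ x)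
  set u := y - c • x
  have hu : u ∈ V := V.sub_mem hy (V.smul_mem c hx)
  have hux : u ⬝ᵥ x = 0 := by
    simp only [u, c, sub_dotProduct, smul_dotProduct, smul_eq_mul, div_mul_cancel₀ _ hxx, sub_self]
  have hy : y = c • x + u := by simp [u]
  rw [hy, ha.tensorForm_smul_add, hQ x hx, ha.tensorForm_cubic_eq_zero hQ hx hu, hM x hx u hu hux]
  ring

lemma tensorForm_eq_zero_of_mixed (ha : IsElastic a)
    (h : ∀ x ∈ V, ∀ y ∈ V, tensorForm a x y x y = 0)
    {x y z w : ι → ℝ} (hx : x ∈ V) (hy : y ∈ V) (hz : z ∈ V) (hw : w ∈ V) :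
    tensorForm a x y z w = 0 := by
  have h₁ : ∀ y ∈ V, ∀ z ∈ V, tensorForm a x y z y = 0 := by
    intro y hy z hz
    have := h (x + z) (V.add_mem hx hz) y hy
    simp only [tensorForm_add₁, tensorForm_add₃, h x hx y hy, h z hz y hy,
      ha.tensorForm_swap_pairs z y x y] at this
    linarith
  -- polarizing `h₁` once more: the form is alternating in its second and fourth slots
  have h₂ : ∀ y ∈ V, ∀ z ∈ V, ∀ w ∈ V, tensorForm a x y z w = -tensorForm a x w z y := by
    intro y hy z hz w hw
    have := h₁ (y + w) (V.add_mem hy hw) z hz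
    simp only [tensorForm_add₂, tensorForm_add₄, h₁ y hy z hz, h₁ w hw z hz] at this
    linarith
  linarith [h₂ y hy z hz w hw, h₂ w hw y hy z hz, h₂ z hz w hw y hy,
    ha.tensorForm_swap_right x w z y, ha.tensorForm_swap_right x z y w,
    ha.tensorForm_swap_right x y w z]

end IsElastic

section Orthogonal

variable [DecidableEq ι] {a : ι → ι → ι → ι → ℝ} {i₀ : ι} {x : ι → ℝ}

lemma tensorForm_single_self_single_eq_zero
    (hT : ∀ v ∈ coordHyperplane i₀, ∀ u ∈ coordHyperplane i₀, u ⬝ᵥ v = 0 →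
      tensorForm a x v v u = 0)
    {j k : ι} (hj : j ≠ i₀) (hk : k ≠ i₀) (hjk : j ≠ k) :
    tensorForm a x (Pi.single j 1) (Pi.single j 1) (Pi.single k 1) = 0 :=
  hT _ (single_mem_coordHyperplane hj) _ (single_mem_coordHyperplane hk) (by simp [hjk])

namespace IsElastic

lemma tensorForm_single_single_single_eq_zero (ha : IsElastic a)
    (hT : ∀ v ∈ coordHyperplane i₀, ∀ u ∈ coordHyperplane i₀, u ⬝ᵥ v = 0 →
      tensorForm a x v v u = 0)
    {i j k : ι} (hi : i ≠ i₀) (hj : j ≠ i₀) (hk : k ≠ i₀) (hjk : j ≠ k) :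
    tensorForm a x (Pi.single i 1) (Pi.single j 1) (Pi.single k 1) = 0 := by
  have hT₀ {r s} := tensorForm_single_self_single_eq_zero hT (j := r) (k := s)
  -- `v = e r + e s`, `u = e t`: alternating in slots 2, 3 and symmetric in slots 3, 4, so zero
  have anti : ∀ r s t, r ≠ i₀ → s ≠ i₀ → t ≠ i₀ → r ≠ s → r ≠ t → s ≠ t →
      tensorForm a x (Pi.single r 1) (Pi.single s 1) (Pi.single t 1)
        = -tensorForm a x (Pi.single s 1) (Pi.single r 1) (Pi.single t 1) := by
    intro r s t hr hs ht hrs hrt hst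
    have := hT _ (add_mem (single_mem_coordHyperplane hr) (single_mem_coordHyperplane hs)) _
      (single_mem_coordHyperplane ht) (by simp [hrt.symm, hst.symm])
    simp only [tensorForm_add₂, tensorForm_add₃, hT₀ hr ht hrt, hT₀ hs ht hst] at this
    linarith
  rcases eq_or_ne i j with rfl | hij
  · exact hT₀ hi hk hjk
  rcases eq_or_ne i k with rfl | hik
  · rw [ha.tensorForm_swap_right]; exact hT₀ hi hj hij
  linarith [anti i j k hi hj hk hij hik hjk, anti j k i hj hk hi hjk hij.symm hik.symm,
    anti k i j hk hi hj hik.symm hjk.symm hij,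
    ha.tensorForm_swap_right x (Pi.single j 1) (Pi.single i 1) (Pi.single k 1),
    ha.tensorForm_swap_right x (Pi.single k 1) (Pi.single j 1) (Pi.single i 1),
    ha.tensorForm_swap_right x (Pi.single i 1) (Pi.single k 1) (Pi.single j 1)]

lemma tensorForm_single_single_self_eq (ha : IsElastic a)
    (hT : ∀ v ∈ coordHyperplane i₀, ∀ u ∈ coordHyperplane i₀, u ⬝ᵥ v = 0 →
      tensorForm a x v v u = 0)
    {i j k : ι} (hi : i ≠ i₀) (hj : j ≠ i₀) (hk : k ≠ i₀) :
    tensorForm a x (Pi.single i 1) (Pi.single j 1) (Pi.single j 1)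
      = tensorForm a x (Pi.single i 1) (Pi.single k 1) (Pi.single k 1) := by
  -- `v = e r ± e s`, `u = e r ∓ e s`
  have diag : ∀ r s, r ≠ i₀ → s ≠ i₀ →
      tensorForm a x (Pi.single s 1) (Pi.single r 1) (Pi.single r 1)
        = tensorForm a x (Pi.single s 1) (Pi.single s 1) (Pi.single s 1) := by
    intro r s hr hs
    rcases eq_or_ne r s with rfl | hrs
    · rfl
    have hr' := single_mem_coordHyperplane hr
    have hs' := single_mem_coordHyperplane hs
    have h₁ := hT _ (add_mem hr' hs') _ (sub_mem hr' hs') (by simp [hrs, hrs.symm])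
    have h₂ := hT _ (sub_mem hr' hs') _ (add_mem hr' hs') (by simp [hrs, hrs.symm])
    simp only [tensorForm_add₂, tensorForm_add₃, tensorForm_add₄, tensorForm_sub₂,
      tensorForm_sub₃, tensorForm_sub₄,
      ha.tensorForm_swap_right x (Pi.single r 1) (Pi.single s 1) (Pi.single r 1),
      ha.tensorForm_swap_right x (Pi.single s 1) (Pi.single r 1) (Pi.single s 1),
      tensorForm_single_self_single_eq_zero hT hr hs hrs,
      tensorForm_single_self_single_eq_zero hT hs hr hrs.symm] at h₁ h₂
    linarith
  rw [diag j i hj hi, diag k i hk hi]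

end IsElastic

end Orthogonal

lemma quartic_and_mixed_eq_zero_of_unit [DecidableEq ι] {a : ι → ι → ι → ι → ℝ} {i₀ : ι}
    (H : ∀ v : ι → ℝ, ∑ i, v i ^ 2 = 1 → v ⬝ᵥ Pi.single i₀ 1 = 0 →
      tensorForm a v v v v = 0 ∧ ∀ q : ι → ℝ, q ⬝ᵥ v = 0 → tensorForm a v q v q = 0)
    {v : ι → ℝ} (hv : v ∈ coordHyperplane i₀) :
    tensorForm a v v v v = 0 ∧ ∀ q : ι → ℝ, q ⬝ᵥ v = 0 → tensorForm a v q v q = 0 := by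
  refine forall_of_forall_sum_sq_eq_one (P := fun v => v ∈ coordHyperplane i₀ →
      tensorForm a v v v v = 0 ∧ ∀ q : ι → ℝ, q ⬝ᵥ v = 0 → tensorForm a v q v q = 0)
    (fun _ => by simp) (fun c v hc h hv => ?_) (fun v hv hv' => H v hv (by simpa using hv')) v hv
  obtain ⟨hQ, hM⟩ := h (Submodule.smul_mem _ c hv)
  refine ⟨by simpa [hc] using hQ, fun q hq => ?_⟩
  simpa [hc] using hM q (by simp [dotProduct_smul, hq])

section Reduction

variable [DecidableEq ι] {a : ι → ι → ι → ι → ℝ} (i₀ : ι)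

lemma forall_tensorForm_eq_zero_iff :
    (∀ x ∈ coordHyperplane i₀, ∀ y ∈ coordHyperplane i₀, ∀ z ∈ coordHyperplane i₀,
        ∀ w ∈ coordHyperplane i₀, tensorForm a x y z w = 0)
      ↔ ∀ i j k l, i ≠ i₀ → j ≠ i₀ → k ≠ i₀ → l ≠ i₀ → a i j k l = 0 := by
  constructor
  · intro h i j k l hi hj hk hl
    simpa using h _ (single_mem_coordHyperplane hi) _ (single_mem_coordHyperplane hj)
      _ (single_mem_coordHyperplane hk) _ (single_mem_coordHyperplane hl)
  · intro h x hx y hy z hz w hw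
    rw [tensorForm_congr (b := 0), tensorForm_zero_coeff]
    intro i j k l hi hj hk hl
    exact h i j k l (by rintro rfl; exact hi hx) (by rintro rfl; exact hj hy)
      (by rintro rfl; exact hk hz) (by rintro rfl; exact hl hw)

namespace IsElastic

lemma forall_tensorForm_single_eq_zero_iff (ha : IsElastic a) :
    (∀ v ∈ coordHyperplane i₀, tensorForm a v (Pi.single i₀ 1) v (Pi.single i₀ 1) = 0)
      ↔ ∀ i j, i ≠ i₀ → j ≠ i₀ → a i₀ i i₀ j = 0 := by
  constructor
  · intro h i j hi hj
    have hi' := single_mem_coordHyperplane hi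
    have hj' := single_mem_coordHyperplane hj
    have := h _ (add_mem hi' hj')
    simp only [tensorForm_add₁, tensorForm_add₃, h _ hi', h _ hj', tensorForm_single,
      ha.swap_pairs j i₀ i i₀] at this
    rw [ha.swap_left, ha.swap_right]
    linarith
  · intro h v hv
    rw [tensorForm_congr (b := 0), tensorForm_zero_coeff]
    intro i j k l hi hj hk hl
    simp only [Pi.single_apply, ne_eq, ite_eq_right_iff, one_ne_zero, imp_false,
      not_not] at hj hl
    subst hj hl
    rw [ha.swap_left, ha.swap_right]
    exact h i k (by rintro rfl; exact hi hv) (by rintro rfl; exact hk hv)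

lemma forall_tensorForm_orthogonal_eq_zero_iff (ha : IsElastic a) :
    (∀ v ∈ coordHyperplane i₀, ∀ u ∈ coordHyperplane i₀, u ⬝ᵥ v = 0 →
        tensorForm a (Pi.single i₀ 1) v v u = 0)
      ↔ (∀ i j k, i ≠ i₀ → j ≠ i₀ → k ≠ i₀ → j ≠ k → a i₀ i j k = 0)
        ∧ ∀ i j k, i ≠ i₀ → j ≠ i₀ → k ≠ i₀ → a i₀ i j j = a i₀ i k k := by
  constructor
  · intro hT
    refine ⟨fun i j k hi hj hk hjk => ?_, fun i j k hi hj hk => ?_⟩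
    · simpa using ha.tensorForm_single_single_single_eq_zero hT hi hj hk hjk
    · simpa using ha.tensorForm_single_single_self_eq hT hi hj hk
  · rintro ⟨hoff, hdiag⟩ v hv u hu huv
    -- on the support, `a i₀ j k l = a i₀ j j j * δ k l`
    rw [tensorForm_congr (b := fun _ j k l => if k = l then a i₀ j j j else 0)]
    · have hvu : ∑ k, v k * u k = 0 := by rwa [dotProduct_comm] at huv
      simp [tensorForm, Pi.single_apply, ite_mul, mul_assoc, ← mul_sum, hvu]
    · intro i j k l hi hj hk hl
      simp only [Pi.single_apply, ne_eq, ite_eq_right_iff, one_ne_zero, imp_false,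
        not_not] at hi
      subst hi
      have hj : j ≠ i := by rintro rfl; exact hj hv
      have hk : k ≠ i := by rintro rfl; exact hk hv
      have hl : l ≠ i := by rintro rfl; exact hl hu
      split_ifs with hkl
      · rw [← hkl, hdiag j k j hj hk hj]
      · exact hoff j k l hj hk hl hkl

lemma unit_conditions_iff (ha : IsElastic a) :
    (∀ v : ι → ℝ, ∑ i, v i ^ 2 = 1 → v ⬝ᵥ Pi.single i₀ 1 = 0 →
        tensorForm a v v v v = 0 ∧ ∀ q : ι → ℝ, q ⬝ᵥ v = 0 → tensorForm a v q v q = 0)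
      ↔ (∀ x ∈ coordHyperplane i₀, ∀ y ∈ coordHyperplane i₀, ∀ z ∈ coordHyperplane i₀,
            ∀ w ∈ coordHyperplane i₀, tensorForm a x y z w = 0)
        ∧ (∀ v ∈ coordHyperplane i₀, tensorForm a v (Pi.single i₀ 1) v (Pi.single i₀ 1) = 0)
        ∧ (∀ v ∈ coordHyperplane i₀, ∀ u ∈ coordHyperplane i₀, u ⬝ᵥ v = 0 →
            tensorForm a (Pi.single i₀ 1) v v u = 0) := by
  constructor
  · intro H
    have hQM (v : ι → ℝ) (hv : v ∈ coordHyperplane i₀) := quartic_and_mixed_eq_zero_of_unit H hv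
    have R1 : ∀ x ∈ coordHyperplane i₀, ∀ y ∈ coordHyperplane i₀, ∀ z ∈ coordHyperplane i₀,
        ∀ w ∈ coordHyperplane i₀, tensorForm a x y z w = 0 :=
      fun x hx y hy z hz w hw => ha.tensorForm_eq_zero_of_mixed
        (fun x hx y hy => ha.tensorForm_mixed_eq_zero_of_orthogonal (fun v hv => (hQM v hv).1)
          (fun v hv u _ huv => (hQM v hv).2 u huv) hx hy) hx hy hz hw
    have R2 : ∀ v ∈ coordHyperplane i₀,
        tensorForm a v (Pi.single i₀ 1) v (Pi.single i₀ 1) = 0 :=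
      fun v hv => (hQM v hv).2 _ (by simpa using hv)
    refine ⟨R1, R2, fun v hv u hu huv => ?_⟩
    have := (hQM v hv).2 ((1 : ℝ) • Pi.single i₀ 1 + u)
      (by simpa [add_dotProduct, huv] using hv)
    rw [ha.tensorForm_smul_add, R2 v hv, R1 v hv u hu v hv u hu] at this
    linarith
  · rintro ⟨R1, R2, R3⟩ v - hv
    replace hv : v ∈ coordHyperplane i₀ := by simpa using hv
    refine ⟨R1 v hv v hv v hv v hv, fun q hq => ?_⟩
    set u := q - q i₀ • Pi.single i₀ 1
    have hu : u ∈ coordHyperplane i₀ := by simp [u]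
    have huv : u ⬝ᵥ v = 0 := by
      simp only [mem_coordHyperplane] at hv
      simp [u, sub_dotProduct, hq, hv]
    rw [show q = q i₀ • Pi.single i₀ 1 + u by simp [u], ha.tensorForm_smul_add, R2 v hv,
      R3 v hv u hu huv, R1 v hv u hu v hv u hu]
    ring

end IsElastic

end Reduction

-- Indices are 0-based: `0 : Fin n` plays the role of the paper's index 1.
theorem reduction_lemma_general (n : ℕ) [NeZero n]
    (p : Fin n → ℝ) (hp : p = fun i => if i = (0 : Fin n) then (1:ℝ) else 0)
    (a : Fin n → Fin n → Fin n → Fin n → ℝ)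
    (hsymm1 : ∀ i j k l, a i j k l = a j i k l)
    (hsymm2 : ∀ i j k l, a i j k l = a i j l k)
    (hsymm3 : ∀ i j k l, a i j k l = a k l i j) :
    ((∀ v : Fin n → ℝ, (∑ i, v i ^ 2) = 1 → (∑ i, v i * p i) = 0 →
        ((∑ i, ∑ j, ∑ k, ∑ l, a i j k l * v i * v j * v k * v l) = 0
          ∧ ∀ q : Fin n → ℝ, (∑ i, q i * v i) = 0 →
              (∑ i, ∑ j, ∑ k, ∑ l, a i j k l * v i * q j * v k * q l) = 0))
      ↔
      ((∀ i j k l : Fin n, i ≠ 0 → j ≠ 0 → k ≠ 0 → l ≠ 0 → a i j k l = 0)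
        ∧ (∀ i j : Fin n, i ≠ 0 → j ≠ 0 → a 0 i 0 j = 0)
        ∧ (∀ i j k : Fin n, i ≠ 0 → j ≠ 0 → k ≠ 0 → j ≠ k → a 0 i j k = 0)
        ∧ (∀ i j k : Fin n, i ≠ 0 → j ≠ 0 → k ≠ 0 → a 0 i j j = a 0 i k k))) := by
  obtain rfl : p = Pi.single 0 1 := hp.trans (funext fun i => by simp [Pi.single_apply])
  have ha : IsElastic a := ⟨hsymm1, hsymm2, hsymm3⟩
  exact (ha.unit_conditions_iff 0).trans <| and_congr (forall_tensorForm_eq_zero_iff 0) <|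
    and_congr (ha.forall_tensorForm_single_eq_zero_iff 0)
      (ha.forall_tensorForm_orthogonal_eq_zero_iff 0)

/-- Lemma `reduction`: Let `p = e₁` be the first standard basis vector
of ℝⁿ (`n ≥ 3`) and let `a` be an elastic 2-tensor with `a_{11ij} = 0`. The quartic and
mixed vanishing conditions over unit `v ⊥ p` are equivalent to the explicit linear
conditions on the components of `a`. Indices in `Fin n` are 0-based, so the index `0`
plays the role of `1` and indices `≠ 0` play the role of `i,j,k,l ≥ 2`. -/
theorem reduction_lemma (n : ℕ) [NeZero n] (hn : 3 ≤ n)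
    (p : Fin n → ℝ) (hp : p = fun i => if i = (0 : Fin n) then (1:ℝ) else 0)
    (a : Fin n → Fin n → Fin n → Fin n → ℝ)
    (hsymm1 : ∀ i j k l, a i j k l = a j i k l)
    (hsymm2 : ∀ i j k l, a i j k l = a i j l k)
    (hsymm3 : ∀ i j k l, a i j k l = a k l i j)
    (h11 : ∀ i j, a 0 0 i j = 0) :
    ((∀ v : Fin n → ℝ, (∑ i, v i ^ 2) = 1 → (∑ i, v i * p i) = 0 →
        ((∑ i, ∑ j, ∑ k, ∑ l, a i j k l * v i * v j * v k * v l) = 0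
          ∧ ∀ q : Fin n → ℝ, (∑ i, q i * v i) = 0 →
              (∑ i, ∑ j, ∑ k, ∑ l, a i j k l * v i * q j * v k * q l) = 0))
      ↔
      ((∀ i j k l : Fin n, i ≠ 0 → j ≠ 0 → k ≠ 0 → l ≠ 0 → a i j k l = 0)
        ∧ (∀ i j : Fin n, i ≠ 0 → j ≠ 0 → a 0 i 0 j = 0)
        ∧ (∀ i j k : Fin n, i ≠ 0 → j ≠ 0 → k ≠ 0 → j ≠ k → a 0 i j k = 0)
        ∧ (∀ i j k : Fin n, i ≠ 0 → j ≠ 0 → k ≠ 0 → a 0 i j j = a 0 i k k))) :=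
  reduction_lemma_general n p hp a hsymm1 hsymm2 hsymm3
end

section
/- Let W be a Schwartz vector field on ℝⁿ and define the elastic 2-tensor field f = ε(DW ⊗ I), i.e. the elastic symmetrization of ∂_i W_j δ_{kl}. Then for every x ∈ ℝⁿ, every unit vector v, and every q ∈ ℝv ∪ v⊥, the elastic X-ray transform ∫_ℝ ∑_{i,j,k,l} f_{ijkl}(x+tv) v_i q_j v_k q_l dt = 0. -/
/-!
Contracting the elastic symmetrization of `DW ⊗ I` against `v ⊗ q ⊗ v ⊗ q` gives
`½ ⟨(DW + DWᵀ) v, q⟩ ⟨v, q⟩`. This vanishes when `q ⊥ v`; when `q = s v` it equals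
`s² d/dt ⟨v, W(x + t v)⟩`, and the restriction of a Schwartz function to a line is again
Schwartz, so its derivative integrates to zero.
-/

open MeasureTheory Filter
open scoped SchwartzMap

section Contraction

variable {ι : Type*} [Fintype ι]

noncomputable def elasticSymm (T : ι → ι → ι → ι → ℝ) (i j k l : ι) : ℝ :=
  (1/8) * (T i j k l + T j i k l + T i j l k + T j i l k
    + T k l i j + T l k i j + T k l j i + T l k j i)

theorem Fintype.sum_swap_pairs {M : Type*} [AddCommMonoid M] (F : ι → ι → ι → ι → M) :
    ∑ i, ∑ j, ∑ k, ∑ l, F i j k l = ∑ i, ∑ j, ∑ k, ∑ l, F k l i j := by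
  calc ∑ i, ∑ j, ∑ k, ∑ l, F i j k l = ∑ p : ι × ι, ∑ r : ι × ι, F p.1 p.2 r.1 r.2 := by
        simp only [Fintype.sum_prod_type]
    _ = ∑ r : ι × ι, ∑ p : ι × ι, F p.1 p.2 r.1 r.2 := Finset.sum_comm
    _ = _ := by simp only [Fintype.sum_prod_type]

theorem sum_elasticSymm_mul (T : ι → ι → ι → ι → ℝ) (a b : ι → ℝ) :
    ∑ i, ∑ j, ∑ k, ∑ l, elasticSymm T i j k l * a i * b j * a k * b l
      = (1/4) * ∑ i, ∑ j, ∑ k, ∑ l,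
          (T i j k l + T j i k l + T i j l k + T j i l k) * a i * b j * a k * b l := by
  have hswap : ∑ i, ∑ j, ∑ k, ∑ l,
        (T k l i j + T l k i j + T k l j i + T l k j i) * a i * b j * a k * b l
      = ∑ i, ∑ j, ∑ k, ∑ l,
        (T i j k l + T j i k l + T i j l k + T j i l k) * a i * b j * a k * b l := by
    rw [Fintype.sum_swap_pairs]
    refine Finset.sum_congr rfl fun i _ => Finset.sum_congr rfl fun j _ =>
      Finset.sum_congr rfl fun k _ => Finset.sum_congr rfl fun l _ => by ring
  rw [show (1/4 : ℝ) = 1/8 + 1/8 by norm_num, add_mul]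
  nth_rw 2 [← hswap]
  simp only [elasticSymm, Finset.mul_sum, ← Finset.sum_add_distrib]
  refine Finset.sum_congr rfl fun i _ => Finset.sum_congr rfl fun j _ =>
    Finset.sum_congr rfl fun k _ => Finset.sum_congr rfl fun l _ => by ring

variable [DecidableEq ι]

theorem sum_symm_delta_mul (D : ι → ι → ℝ) (a b : ι → ℝ) :
    ∑ i, ∑ j, ∑ k, ∑ l, (D i j * (if k = l then 1 else 0) + D j i * (if k = l then 1 else 0)
        + D i j * (if l = k then 1 else 0) + D j i * (if l = k then 1 else 0))
          * a i * b j * a k * b l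
      = 2 * (∑ i, ∑ j, (D i j + D j i) * a i * b j) * ∑ k, a k * b k := by
  conv_lhs => simp only [mul_add, add_mul, Finset.sum_add_distrib, mul_ite, ite_mul, mul_one,
    mul_zero, zero_mul, Finset.sum_ite_eq, Finset.sum_ite_eq', Finset.mem_univ, if_true]
  rw [mul_assoc, Finset.sum_mul]
  simp_rw [Finset.sum_mul_sum, Finset.mul_sum, ← Finset.sum_add_distrib]
  refine Finset.sum_congr rfl fun i _ => Finset.sum_congr rfl fun j _ =>
    Finset.sum_congr rfl fun k _ => by ring

theorem sum_elasticSymm_mul_delta (D : ι → ι → ℝ) (a b : ι → ℝ) :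
    ∑ i, ∑ j, ∑ k, ∑ l,
      elasticSymm (fun i j k l => D i j * if k = l then 1 else 0) i j k l * a i * b j * a k * b l
      = (1/2) * (∑ i, ∑ j, (D i j + D j i) * a i * b j) * ∑ k, a k * b k := by
  rw [sum_elasticSymm_mul, sum_symm_delta_mul]
  ring

omit [DecidableEq ι] in
theorem sum_add_swap_mul_mul_smul (D : ι → ι → ℝ) (a : ι → ℝ) (s : ℝ) :
    ∑ i, ∑ j, (D i j + D j i) * a i * (s * a j) = 2 * s * ∑ j, a j * ∑ i, a i * D i j := by
  simp only [add_mul, Finset.sum_add_distrib]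
  rw [Finset.sum_comm (f := fun i j => D i j * a i * (s * a j))]
  simp only [Finset.mul_sum, ← Finset.sum_add_distrib]
  refine Finset.sum_congr rfl fun j _ => Finset.sum_congr rfl fun i _ => by ring

end Contraction

section Line

variable {E F : Type*} [NormedAddCommGroup E] [NormedSpace ℝ E] [NormedAddCommGroup F]
  [NormedSpace ℝ F]

theorem antilipschitzWith_add_smul (x : E) {v : E} (hv : v ≠ 0) :
    AntilipschitzWith ‖v‖₊⁻¹ fun t : ℝ => x + t • v := by
  have hline : (fun t : ℝ => x + t • v) = AffineMap.lineMap x (x + v) := by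
    ext t; simp [AffineMap.lineMap_apply_module', add_comm]
  simpa [hline, nndist_eq_nnnorm] using
    antilipschitzWith_lineMap (𝕜 := ℝ) (p₁ := x) (p₂ := x + v) (by simpa using hv)

namespace SchwartzMap

noncomputable def compLine (f : 𝓢(E, F)) (x : E) {v : E} (hv : v ≠ 0) : 𝓢(ℝ, F) :=
  compCLMOfAntilipschitz ℝ (g := fun t : ℝ => x + t • v) (by fun_prop)
    (antilipschitzWith_add_smul x hv) f

theorem hasDerivAt_compLine (f : 𝓢(E, F)) (x : E) {v : E} (hv : v ≠ 0) (t : ℝ) :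
    HasDerivAt (f.compLine x hv) (fderiv ℝ f (x + t • v) v) t := by
  have hline : HasDerivAt (fun s : ℝ => x + s • v) v t := by
    simpa using ((hasDerivAt_id t).smul_const v).const_add x
  exact f.differentiableAt.hasFDerivAt.comp_hasDerivAt t hline

theorem integral_eq_zero_of_hasDerivAt [CompleteSpace F] (g : 𝓢(ℝ, F)) {g' : ℝ → F}
    (hg : ∀ t, HasDerivAt g (g' t) t) : ∫ t, g' t = 0 := by
  have hg' : g' = derivCLM ℝ F g := funext fun t => by simp [(hg t).deriv]
  have hlim := g.tendsto_cocompact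
  rw [cocompact_eq_atBot_atTop] at hlim
  rw [integral_of_hasDerivAt_of_tendsto hg (hg' ▸ (derivCLM ℝ F g).integrable)
    (hlim.mono_left le_sup_left) (hlim.mono_left le_sup_right), sub_self]

theorem integral_sum_smul_fderiv_line_eq_zero [CompleteSpace F] {ι : Type*} [Fintype ι]
    (f : ι → 𝓢(E, F)) (c : ι → ℝ) (x : E) {v : E} (hv : v ≠ 0) :
    ∫ t : ℝ, ∑ j, c j • fderiv ℝ (f j) (x + t • v) v = 0 := by
  let g : 𝓢(ℝ, F) := ∑ j, c j • (f j).compLine x hv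
  have hcoe : ⇑g = ∑ j, fun t => c j • (f j).compLine x hv t := by ext; simp [g]
  refine g.integral_eq_zero_of_hasDerivAt fun t => ?_
  rw [hcoe]
  exact HasDerivAt.sum fun j _ => ((f j).hasDerivAt_compLine x hv t).const_smul (c j)

end SchwartzMap

theorem EuclideanSpace.sum_smul_apply_single {ι : Type*} [Fintype ι] [DecidableEq ι]
    (L : EuclideanSpace ℝ ι →L[ℝ] F) (v : EuclideanSpace ℝ ι) :
    ∑ i, v i • L (EuclideanSpace.single i 1) = L v := by
  conv_rhs => rw [← (EuclideanSpace.basisFun ι ℝ).sum_repr v]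
  simp [map_sum, map_smul]

end Line

/-- For a Schwartz vector field `W` on ℝⁿ, the elastic 2-tensor field
`f = ε(DW ⊗ I)` (elastic symmetrization of `∂_i W_j δ_{kl}`) has vanishing elastic
X-ray transform: for every `x`, unit `v` and `q ∈ ℝv ∪ v⊥`,
`∫ ∑ f_{ijkl}(x+tv) v_i q_j v_k q_l dt = 0`. -/
theorem K_in_kernel (n : ℕ)
    (W : Fin n → SchwartzMap (EuclideanSpace ℝ (Fin n)) ℝ)
    (T : Fin n → Fin n → Fin n → Fin n → EuclideanSpace ℝ (Fin n) → ℝ)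
    (hT : T = fun i j k l x =>
      fderiv ℝ (W j) x (EuclideanSpace.single i 1) * (if k = l then (1:ℝ) else 0))
    (f : Fin n → Fin n → Fin n → Fin n → EuclideanSpace ℝ (Fin n) → ℝ)
    (hf : f = fun i j k l x => (1/8) *
      (T i j k l x + T j i k l x + T i j l k x + T j i l k x
        + T k l i j x + T l k i j x + T k l j i x + T l k j i x))
    (x v q : EuclideanSpace ℝ (Fin n)) (hv : ‖v‖ = 1)
    (hq : (∃ t : ℝ, q = t • v) ∨ inner ℝ q v = (0:ℝ)) :
    (∫ t : ℝ, ∑ i, ∑ j, ∑ k, ∑ l,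
      f i j k l (x + t • v) * v i * q j * v k * q l) = 0 := by
  have hf_elastic : ∀ y i j k l, f i j k l y = elasticSymm
      (fun i j k l => fderiv ℝ (W j) y (EuclideanSpace.single i 1) * if k = l then 1 else 0)
      i j k l := by
    subst hf hT; intros; rfl
  simp_rw [hf_elastic, sum_elasticSymm_mul_delta]
  rcases hq with ⟨s, rfl⟩ | hqv
  · have hv0 : v ≠ 0 := by rintro rfl; simp at hv
    have hvv : ∑ k, v k * (s • v) k = s := by
      have hnorm : ∑ k, v k * v k = 1 := by
        simpa [hv, sq] using (EuclideanSpace.norm_sq_eq v).symm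
      simp only [PiLp.smul_apply, smul_eq_mul, mul_left_comm _ s, ← Finset.mul_sum, hnorm,
        mul_one]
    rw [← mul_zero (s ^ 2), ← SchwartzMap.integral_sum_smul_fderiv_line_eq_zero W v x hv0,
      ← integral_const_mul]
    congr 1 with t
    rw [hvv]
    simp only [PiLp.smul_apply, smul_eq_mul, sum_add_swap_mul_mul_smul]
    simp only [← smul_eq_mul (a := v _), EuclideanSpace.sum_smul_apply_single]
    ring
  · have hvq : ∑ k, v k * q k = 0 := by simpa [PiLp.inner_apply] using hqv
    simp [hvq]
end
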